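/- Let a be a critical element for a symmetric matrix A with similarity layers X_0, ..., X_k rooted at a covering V. If there exist x ∈ X_i, y ∈ X_j, z ∈ X_h with i < j < h and A[y,z] < A[x,z] ≤ A[x,y], then {a, y, z} is a weighted asteroidal triple of A. -/

import Mathlib

/-- The consecutive pairs of `l` avoid `z` with respect to the matrix `A`. -/
def AvoidChain {V : Type*} (A : V → V → ℝ) (z : V) (l : List V) : Prop :=
  l.Chain' fun u w => min (A u z) (A w z) < A u w

/-- `l` is a path from `x` to `y` avoiding `z` in `A`: a sequence of distinct
elements starting at `x`, ending at `y`, each consecutive pair avoiding `z`. -/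
def AvoidPath {V : Type*} (A : V → V → ℝ) (z x y : V) (l : List V) : Prop :=
  l.Nodup ∧ l.head? = some x ∧ l.getLast? = some y ∧ AvoidChain A z l

/-- `x ~^z y`: there is a path from `x` to `y` avoiding `z` in `A`. -/
def Avoids {V : Type*} (A : V → V → ℝ) (z x y : V) : Prop :=
  ∃ l, AvoidPath A z x y l

/-- `{x,y,z}` is a weighted asteroidal triple of `A`. -/
def IsWAT {V : Type*} (A : V → V → ℝ) (x y z : V) : Prop :=
  x ≠ y ∧ y ≠ z ∧ x ≠ z ∧ Avoids A z x y ∧ Avoids A x y z ∧ Avoids A y z x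

/-- `π` is a Robinson ordering of `A`. -/
def IsRobinsonOrdering {V : Type*} [Fintype V] (A : V → V → ℝ)
    (π : Fin (Fintype.card V) ≃ V) : Prop :=
  ∀ i j k : Fin (Fintype.card V), i < j → j < k →
    A (π i) (π k) ≤ min (A (π i) (π j)) (A (π j) (π k))

/-- `A` is Robinsonian: it admits a Robinson ordering. -/
def Robinsonian {V : Type*} [Fintype V] (A : V → V → ℝ) : Prop :=
  ∃ π : Fin (Fintype.card V) ≃ V, IsRobinsonOrdering A π

/-- `S` is strongly homogeneous for `A`. -/
def StronglyHomogeneous {V : Type*} [DecidableEq V] (A : V → V → ℝ) (S : Finset V) : Prop :=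
  ∀ x ∉ S, ∀ y ∈ S, ∀ z ∈ S, A x y = A x z ∧ A x y ≤ A y z

/-- `a` is critical for `A`: between any two distinct elements of `V \ {a}`
there is a path avoiding `a`. -/
def IsCritical {V : Type*} (A : V → V → ℝ) (a : V) : Prop :=
  ∀ x y : V, x ≠ a → y ≠ a → x ≠ y → Avoids A a x y

/-- The similarity layers of `A` rooted at `a`, together with the union of the
layers so far: `(simLayersAux A a n).1` is the `n`-th layer `X_n` and
`(simLayersAux A a n).2 = X_0 ∪ ⋯ ∪ X_n`. -/
def simLayersAux {V : Type*} (A : V → V → ℝ) (a : V) : ℕ → Set V × Set V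
  | 0 => ({a}, {a})
  | n + 1 =>
    let U := (simLayersAux A a n).2
    let L := { y | y ∉ U ∧ ∀ x ∈ U, ∀ z ∉ U, A x z ≤ A x y }
    (L, U ∪ L)

/-- The `n`-th similarity layer `X_n` of `A` rooted at `a`. -/
def simLayer {V : Type*} (A : V → V → ℝ) (a : V) (n : ℕ) : Set V :=
  (simLayersAux A a n).1


/-!
Every element `x` of `X_0 ∪ ⋯ ∪ X_n` is joined to `a` inside `X_0 ∪ ⋯ ∪ X_n` by a path
avoiding any `z` outside it. Induct on `n`: if `x ∈ X_{n+1}` and `z` lies outside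
`X_0 ∪ ⋯ ∪ X_{n+1}`, then `z` violates the defining inequality of `X_{n+1}` at some earlier `u`,
whereas `x` satisfies it, so `A u z < A u x` and the edge `ux` avoids `z`. This joins `a` to `y`
avoiding `z`; the path from `a` to `x` avoiding `y`, extended by the edge `xz` (which avoids `y`
because `A y z < A x z`), joins `a` to `z` avoiding `y`; and criticality of `a` joins `y` and `z`
avoiding `a`.
-/

section SimilarityLayers

variable {V : Type*} (A : V → V → ℝ) (a : V)

/-- `X_0 ∪ ⋯ ∪ X_n`. -/
def simLayerUnion (n : ℕ) : Set V :=
  (simLayersAux A a n).2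

variable {A a}

theorem mem_simLayer_succ {y : V} {n : ℕ} :
    y ∈ simLayer A a (n + 1) ↔ y ∉ simLayerUnion A a n ∧
      ∀ u ∈ simLayerUnion A a n, ∀ w ∉ simLayerUnion A a n, A u w ≤ A u y :=
  Iff.rfl

theorem simLayerUnion_succ (n : ℕ) :
    simLayerUnion A a (n + 1) = simLayerUnion A a n ∪ simLayer A a (n + 1) :=
  rfl

theorem simLayer_subset_simLayerUnion : ∀ n, simLayer A a n ⊆ simLayerUnion A a n
  | 0 => subset_rfl
  | _ + 1 => Set.subset_union_right

theorem simLayerUnion_mono : Monotone (simLayerUnion A a) :=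
  monotone_nat_of_le_succ fun n => by
    rw [simLayerUnion_succ]
    exact Set.subset_union_left

theorem root_mem_simLayerUnion (n : ℕ) : a ∈ simLayerUnion A a n :=
  simLayerUnion_mono (Nat.zero_le n) rfl

theorem notMem_simLayerUnion_of_lt {y : V} {i j : ℕ} (hy : y ∈ simLayer A a j) (hij : i < j) :
    y ∉ simLayerUnion A a i := by
  obtain ⟨j, rfl⟩ : ∃ j', j = j' + 1 := ⟨j - 1, by omega⟩
  exact fun hi => (mem_simLayer_succ.mp hy).1 (simLayerUnion_mono (by omega) hi)

theorem ne_root_of_mem_simLayer {y : V} {j : ℕ} (hy : y ∈ simLayer A a j) (hj : 0 < j) :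
    y ≠ a := fun e => notMem_simLayerUnion_of_lt hy hj (e ▸ root_mem_simLayerUnion 0)

end SimilarityLayers

section AvoidingPaths

variable {V : Type*} {A : V → V → ℝ} {z : V}

theorem AvoidPath.append_singleton {s x w : V} {l : List V} (hp : AvoidPath A z s x l)
    (hw : w ∉ l) (hxw : min (A x z) (A w z) < A x w) : AvoidPath A z s w (l ++ [w]) := by
  obtain ⟨hnd, hhd, hlast, hch⟩ := hp
  have hne : l ≠ [] := by rintro rfl; simp at hhd
  refine ⟨List.nodup_append.mpr ⟨hnd, List.nodup_singleton w, ?_⟩, ?_, by simp, ?_⟩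
  · simp only [List.mem_singleton]
    rintro b hb _ rfl rfl
    exact hw hb
  · rwa [List.head?_append_of_ne_nil _ hne]
  · refine List.isChain_append.mpr ⟨hch, List.isChain_singleton w, ?_⟩
    simp only [hlast, List.head?_cons, Option.mem_some_iff]
    rintro _ rfl _ rfl
    exact hxw

theorem Avoids.symm (hsym : ∀ u v : V, A u v = A v u) {x y : V} (hp : Avoids A z x y) :
    Avoids A z y x := by
  obtain ⟨l, hnd, hhd, hlast, hch⟩ := hp
  refine ⟨l.reverse, List.nodup_reverse.mpr hnd, by rwa [List.head?_reverse],
    by rwa [List.getLast?_reverse], List.isChain_reverse.mpr (hch.imp fun p q hpq => ?_)⟩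
  show min (A q z) (A p z) < A q p
  rwa [min_comm, hsym q p]

end AvoidingPaths

theorem exists_avoidPath_from_root {V : Type*} {A : V → V → ℝ} {a : V} (n : ℕ) :
    ∀ x ∈ simLayerUnion A a n, ∀ z ∉ simLayerUnion A a n,
      ∃ l, AvoidPath A z a x l ∧ ∀ v ∈ l, v ∈ simLayerUnion A a n := by
  induction n with
  | zero =>
    rintro x rfl z -
    exact ⟨[x], ⟨List.nodup_singleton x, rfl, rfl, List.isChain_singleton x⟩,
      by simp [simLayerUnion, simLayersAux]⟩
  | succ n ih =>
    intro x hx z hz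
    rw [simLayerUnion_succ, Set.mem_union, not_or] at hz
    obtain ⟨hzU, hzX⟩ := hz
    rcases hx with hxU | hxX
    · obtain ⟨l, hl, hsub⟩ := ih x hxU z hzU
      exact ⟨l, hl, fun v hv => Or.inl (hsub v hv)⟩
    · obtain ⟨hxU, hxP⟩ := mem_simLayer_succ.mp hxX
      obtain ⟨u, hu, w, hw, hzw⟩ : ∃ u ∈ simLayerUnion A a n, ∃ w ∉ simLayerUnion A a n,
          A u z < A u w := by
        simpa [mem_simLayer_succ, hzU] using hzX
      obtain ⟨l, hl, hsub⟩ := ih u hu z hzU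
      refine ⟨l ++ [x], hl.append_singleton (fun hxl => hxU (hsub x hxl))
        ((min_le_left _ _).trans_lt (hzw.trans_le (hxP u hu w hw))), ?_⟩
      simp only [List.mem_append, List.mem_singleton]
      rintro v (hv | rfl)
      exacts [Or.inl (hsub v hv), Or.inr hxX]

theorem stmt_14_general {V : Type*} (A : V → V → ℝ)
    (hsym : ∀ u v : V, A u v = A v u)
    (a : V) (ha : IsCritical A a)
    (i j h : ℕ) (hij : i < j) (hjh : j < h) (x y z : V)
    (hx : x ∈ simLayer A a i) (hy : y ∈ simLayer A a j) (hz : z ∈ simLayer A a h)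
    (h1 : A y z < A x z) :
    IsWAT A a y z := by
  have hya : y ≠ a := ne_root_of_mem_simLayer hy (by omega)
  have hza : z ≠ a := ne_root_of_mem_simLayer hz (by omega)
  have hyz : y ≠ z := fun e =>
    notMem_simLayerUnion_of_lt hz hjh (e ▸ simLayer_subset_simLayerUnion j hy)
  have hay_avoid_z : Avoids A z a y :=
    let ⟨l, hl, _⟩ := exists_avoidPath_from_root j y (simLayer_subset_simLayerUnion j hy) z
      (notMem_simLayerUnion_of_lt hz hjh)
    ⟨l, hl⟩
  have haz_avoid_y : Avoids A y a z := by
    obtain ⟨l, hl, hsub⟩ := exists_avoidPath_from_root i x (simLayer_subset_simLayerUnion i hx)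
      y (notMem_simLayerUnion_of_lt hy hij)
    have hxz : min (A x y) (A z y) < A x z := by
      rw [hsym z y]
      exact (min_le_right _ _).trans_lt h1
    exact ⟨l ++ [z], hl.append_singleton
      (fun hzl => notMem_simLayerUnion_of_lt hz (hij.trans hjh) (hsub z hzl)) hxz⟩
  exact ⟨hya.symm, hyz, hza.symm, hay_avoid_z, ha y z hya hza hyz, haz_avoid_y.symm hsym⟩

theorem stmt_14 {V : Type*} (A : V → V → ℝ)
    (hsym : ∀ u v : V, A u v = A v u)
    (a : V) (ha : IsCritical A a) (k : ℕ)
    (hcov : ∀ v : V, ∃ i ≤ k, v ∈ simLayer A a i)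
    (i j h : ℕ) (hij : i < j) (hjh : j < h) (x y z : V)
    (hx : x ∈ simLayer A a i) (hy : y ∈ simLayer A a j) (hz : z ∈ simLayer A a h)
    (h1 : A y z < A x z) (h2 : A x z ≤ A x y) :
    IsWAT A a y z :=
  stmt_14_general A hsym a ha i j h hij hjh x y z hx hy hz h1
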